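/- arXiv:2209.14665 — 2 statements merged into one kernel-verified Lean document; each statement's English description precedes it below -/
import Mathlib

section
/- For any a ∈ ℂ, the operators ϖ_a(H) = z∂_z + 1/2, ϖ_a(E) = (1/2)z²(z∂_z + a), ϖ_a(F) = -(1/(2z))∂_z + (a-1)/(2z²) acting on the Laurent polynomial ring ℂ[z, z⁻¹] satisfy the sl₂ commutation relations [ϖ_a(H), ϖ_a(E)] = 2ϖ_a(E), [ϖ_a(H), ϖ_a(F)] = -2ϖ_a(F), [ϖ_a(E), ϖ_a(F)] = ϖ_a(H). -/
/- We model the Laurent polynomial ring `ℂ[z, z⁻¹]` by the free ℂ-module `ℤ →₀ ℂ`,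
where the basis element at index `n : ℤ` represents the monomial `zⁿ`. -/

/-- `ϖ_a(H) = z∂_z + 1/2`: on `zⁿ` it acts by the scalar `n + 1/2`. -/
noncomputable def varpiH : Module.End ℂ (ℤ →₀ ℂ) :=
  Finsupp.lsum ℂ fun n : ℤ => ((n : ℂ) + 1/2) • Finsupp.lsingle n

/-- `ϖ_a(E) = (1/2)z²(z∂_z + a)`: it sends `zⁿ` to `(1/2)(n+a)·z^{n+2}`. -/
noncomputable def varpiE (a : ℂ) : Module.End ℂ (ℤ →₀ ℂ) :=
  Finsupp.lsum ℂ fun n : ℤ => ((1/2 : ℂ) * ((n : ℂ) + a)) • Finsupp.lsingle (n + 2)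

/-- `ϖ_a(F) = -(1/(2z))∂_z + (a-1)/(2z²)`: it sends `zⁿ` to `((a-1-n)/2)·z^{n-2}`. -/
noncomputable def varpiF (a : ℂ) : Module.End ℂ (ℤ →₀ ℂ) :=
  Finsupp.lsum ℂ fun n : ℤ => ((a - 1 - (n : ℂ))/2) • Finsupp.lsingle (n - 2)

/-! All three operators are weighted shifts `zⁿ ↦ c(n) zⁿ⁺ᵈ`, and the bracket of two weighted
shifts is again one, with an explicit weight. The relations thus reduce to identities between
polynomial weights in `n` and `a`. -/

section WeightedShift

variable (R : Type*) [CommRing R] {G : Type*} [AddCommMonoid G]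

noncomputable def weightedShift (d : G) (c : G → R) : Module.End R (G →₀ R) :=
  Finsupp.lsum R fun n => c n • Finsupp.lsingle (n + d)

variable {R}

@[simp]
theorem weightedShift_single (d : G) (c : G → R) (n : G) (x : R) :
    weightedShift R d c (Finsupp.single n x) = Finsupp.single (n + d) (c n * x) := by
  simp only [weightedShift, Finsupp.lsum_single, LinearMap.smul_apply, Finsupp.lsingle_apply,
    Finsupp.smul_single, smul_eq_mul]

theorem weightedShift_mul (d e : G) (c c' : G → R) :
    weightedShift R d c * weightedShift R e c' =
      weightedShift R (e + d) fun n => c (n + e) * c' n := by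
  refine Finsupp.lhom_ext fun n x => ?_
  simp only [Module.End.mul_apply, weightedShift_single, add_assoc, mul_assoc]

theorem smul_weightedShift (r : R) (d : G) (c : G → R) :
    r • weightedShift R d c = weightedShift R d fun n => r * c n := by
  refine Finsupp.lhom_ext fun n x => ?_
  simp only [LinearMap.smul_apply, weightedShift_single, Finsupp.smul_single, smul_eq_mul, mul_assoc]

theorem weightedShift_sub (d : G) (c c' : G → R) :
    weightedShift R d c - weightedShift R d c' = weightedShift R d (c - c') := by
  refine Finsupp.lhom_ext fun n x => ?_
  simp only [LinearMap.sub_apply, weightedShift_single, Pi.sub_apply, sub_mul, Finsupp.single_sub]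

theorem lie_weightedShift (d e : G) (c c' : G → R) :
    ⁅weightedShift R d c, weightedShift R e c'⁆ =
      weightedShift R (d + e) fun n => c (n + e) * c' n - c' (n + d) * c n := by
  rw [Ring.lie_def, weightedShift_mul, weightedShift_mul, add_comm e d, weightedShift_sub]
  rfl

end WeightedShift

theorem varpiH_eq : varpiH = weightedShift ℂ 0 fun n : ℤ => (n : ℂ) + 1/2 := by
  simp [varpiH, weightedShift]

theorem varpiE_eq (a : ℂ) :
    varpiE a = weightedShift ℂ 2 fun n : ℤ => (1/2 : ℂ) * ((n : ℂ) + a) :=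
  rfl

theorem varpiF_eq (a : ℂ) :
    varpiF a = weightedShift ℂ (-2) fun n : ℤ => (a - 1 - (n : ℂ))/2 := by
  simp [varpiF, weightedShift, sub_eq_add_neg]

/-- The operators `ϖ_a` on `ℂ[z, z⁻¹]` satisfy the `sl₂` commutation relations. -/
theorem varpi_sl2_relations (a : ℂ) :
    ⁅varpiH, varpiE a⁆ = (2 : ℂ) • varpiE a ∧
    ⁅varpiH, varpiF a⁆ = (-2 : ℂ) • varpiF a ∧
    ⁅varpiE a, varpiF a⁆ = varpiH := by
  simp only [varpiH_eq, varpiE_eq, varpiF_eq, lie_weightedShift, smul_weightedShift, zero_add,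
    add_neg_cancel, Int.cast_add, Int.cast_neg, Int.cast_ofNat]
  refine ⟨?_, ?_, ?_⟩ <;> congr 1 <;> funext n <;> ring
end

section
/- Let α, β > 0 with α ≠ β, η ∈ ℝ, and g ∈ ℝ with g ≠ 0. Suppose αβ → ∞ along a family with |(α-β)/(α+β)| = k/(αβ) + o(1/(αβ)²) for a fixed k ∈ ℝ. Then the coefficient c̃ = ((αβ-1)/(4αβ))·((α-β)/(α+β))²·(2L+p+1+4η)² - 2i(2(i+2η) - (2(L+p)-2i+1+4η)/(αβ)), after the substitution L ↦ L+p with p = αβ·r + o(αβ), converges as αβ → ∞ to k²r² - 4i(i + 2η - r). -/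
/-!
Multiplying out, the coefficient is a polynomial in `1/x`, `x · e x` and `(a + 2 p x)/x` for two
constants `a`. Each of these rescaled quantities has a limit, since `f = c·g + o(g)` gives
`f/g → c`: namely `0`, `k` and `2r`.
-/

open Filter Asymptotics Topology

theorem Asymptotics.IsLittleO.tendsto_div_of_sub_const_mul {α : Type*} {l : Filter α}
    {f g : α → ℝ} {c : ℝ} (h : (fun x => f x - c * g x) =o[l] g) (hg : ∀ᶠ x in l, g x ≠ 0) :
    Tendsto (fun x => f x / g x) l (𝓝 c) := by
  have := h.tendsto_div_nhds_zero.add_const c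
  rw [zero_add] at this
  refine this.congr' ?_
  filter_upwards [hg] with x hx
  field_simp
  ring

theorem one_div_sq_isBigO_one_div_atTop :
    (fun x : ℝ => 1 / x ^ 2) =O[atTop] fun x : ℝ => 1 / x := by
  refine IsBigO.of_bound 1 ?_
  filter_upwards [eventually_ge_atTop 1] with x hx
  have hx0 : 0 < x := by linarith
  rw [norm_div, norm_div, norm_one, norm_pow, Real.norm_of_nonneg hx0.le, one_mul]
  exact one_div_le_one_div_of_le hx0 (by nlinarith)

theorem tendsto_affine_div_of_isLittleO {p : ℝ → ℝ} {r : ℝ}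
    (hp : (fun x => p x - r * x) =o[atTop] fun x : ℝ => x) (a b : ℝ) :
    Tendsto (fun x => (a + b * p x) / x) atTop (𝓝 (b * r)) := by
  refine IsLittleO.tendsto_div_of_sub_const_mul ?_ (eventually_ne_atTop 0)
  have := (isLittleO_const_id_atTop a).add (hp.const_mul_left b)
  refine this.congr_left fun x => ?_
  ring

/-- The asymptotic computation underlying the iso-parallel confluence of the constraint
recurrence.  Here `x` stands for `αβ`, the function `e x` for `|(α-β)/(α+β)|`
(with `e x = k/x + o(1/x²)`), and `p x` for the shift parameter
(with `p x = r·x + o(x)`).  The diagonal coefficient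
`c̃ = ((x-1)/(4x))·(e x)²·(2(L+p)+1+4η)² - 2i(2(i+2η) - (2(L+p)-2i+1+4η)/x)`
converges, as `x = αβ → ∞`, to `k²r² - 4i(i + 2η - r)`. -/
theorem confluence_coefficient_limit (L i : ℕ) (η k r : ℝ) (e p : ℝ → ℝ)
    (h1 : (fun x => e x - k / x) =o[atTop] fun x : ℝ => 1 / x ^ 2)
    (h2 : (fun x => p x - r * x) =o[atTop] fun x : ℝ => x) :
    Tendsto
      (fun x : ℝ =>
        ((x - 1) / (4 * x)) * (e x) ^ 2 * (2 * ((L : ℝ) + p x) + 1 + 4 * η) ^ 2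
          - 2 * (i : ℝ) * (2 * ((i : ℝ) + 2 * η)
              - (2 * ((L : ℝ) + p x) - 2 * (i : ℝ) + 1 + 4 * η) / x))
      atTop
      (nhds (k ^ 2 * r ^ 2 - 4 * (i : ℝ) * ((i : ℝ) + 2 * η - r))) := by
  have h_inv : Tendsto (fun x : ℝ => 1 / x) atTop (𝓝 0) := by
    simpa only [one_div] using tendsto_inv_atTop_zero
  have h_prefactor : Tendsto (fun x : ℝ => (1 - 1 / x) / 4) atTop (𝓝 (1 / 4)) := by
    simpa using (h_inv.const_sub 1).div_const 4
  have h_e : Tendsto (fun x => e x / (1 / x)) atTop (𝓝 k) := by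
    refine IsLittleO.tendsto_div_of_sub_const_mul ?_
      ((eventually_ne_atTop 0).mono fun x hx => one_div_ne_zero hx)
    simpa only [mul_one_div] using h1.trans_isBigO one_div_sq_isBigO_one_div_atTop
  have h_shift (a : ℝ) := tendsto_affine_div_of_isLittleO h2 a 2
  have h_lim := ((h_prefactor.mul (h_e.pow 2)).mul ((h_shift (2 * L + 1 + 4 * η)).pow 2)).sub
    (((h_shift (2 * L - 2 * i + 1 + 4 * η)).const_sub (2 * (i + 2 * η))).const_mul (2 * i : ℝ))
  convert h_lim.congr' ?_ using 2
  · ring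
  · filter_upwards [eventually_ne_atTop 0] with x hx
    field_simp
    ring
end
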